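/- For the B_n basic invariants p_a(x) = s_a(x_1²,...,x_n²), for each a = 1,...,n and each pair i < j, the polynomial x_i·(∂p_a/∂x_i) − x_j·(∂p_a/∂x_j) is divisible by (x_i² − x_j²), and 4·Σ_{1≤i<j≤n} [x_i·(∂p_a/∂x_i) − x_j·(∂p_a/∂x_j)]/(x_i² − x_j²) = 4(n−a+1)(n−a)·p_{a−1}(x), with p_0 = 1. -/

import Mathlib

open MvPolynomial Finset

/-- The basic invariants of `Bₙ`: `p a = sₐ(x₁², …, xₙ²)`. -/
noncomputable def BnInvariant (n c : ℕ) : MvPolynomial (Fin n) ℝ :=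
  bind₁ (fun i : Fin n => (X i : MvPolynomial (Fin n) ℝ) ^ 2) (esymm (Fin n) ℝ c)

/-!
With `yᵢ = xᵢ²` we have `pₐ = eₐ(y)`, and `xᵢ ∂pₐ/∂xᵢ = 2yᵢ·e_{a-1}(y without yᵢ)`. Splitting off
both `yᵢ` and `yⱼ` gives `yᵢ e_b(T ∪ {j}) - yⱼ e_b(T ∪ {i}) = (yᵢ - yⱼ) e_b(T)`, so the quotient is
`2e_{a-1}(y without yᵢ, yⱼ)`. Summing over pairs, each `(a-1)`-subset `t` is counted once for every
pair in its complement, i.e. `C(n-a+1, 2)` times.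
-/
section esymmOn

variable {σ R : Type*}

def esymmOn [CommSemiring R] (y : σ → R) (S : Finset σ) (k : ℕ) : R :=
  ∑ t ∈ S.powersetCard k, ∏ i ∈ t, y i

variable [CommSemiring R] (y : σ → R)

@[simp]
lemma esymmOn_zero (S : Finset σ) : esymmOn y S 0 = 1 := by
  simp [esymmOn]

variable [DecidableEq σ]

lemma esymmOn_insert_succ {i : σ} {S : Finset σ} (h : i ∉ S) (k : ℕ) :
    esymmOn y (insert i S) (k + 1) = esymmOn y S (k + 1) + y i * esymmOn y S k := by
  have hnot : ∀ t ∈ S.powersetCard k, i ∉ t := fun t ht hi => h ((mem_powersetCard.1 ht).1 hi)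
  rw [esymmOn, powersetCard_succ_insert h, sum_union, sum_image, esymmOn, esymmOn, mul_sum]
  · exact congrArg _ (sum_congr rfl fun t ht => prod_insert (hnot t ht))
  · intro s hs t ht hst
    simpa [erase_insert (hnot s hs), erase_insert (hnot t ht)] using congrArg (erase · i) hst
  · refine disjoint_right.2 fun s hs hmem => ?_
    obtain ⟨t, -, rfl⟩ := mem_image.1 hs
    exact h ((mem_powersetCard.1 hmem).1 (mem_insert_self i t))

lemma sum_powersetCard_esymmOn_sdiff (S : Finset σ) (m b : ℕ) :
    ∑ T ∈ S.powersetCard m, esymmOn y (S \ T) b = (#S - b).choose m • esymmOn y S b := by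
  simp only [esymmOn, smul_sum]
  rw [sum_comm' (t' := S.powersetCard b) (s' := fun t => (S \ t).powersetCard m)]
  · refine sum_congr rfl fun t ht => ?_
    rw [sum_const, card_powersetCard, card_sdiff_of_subset (mem_powersetCard.1 ht).1,
      (mem_powersetCard.1 ht).2]
  · intro T t
    simp only [mem_powersetCard, subset_sdiff, disjoint_comm (a := t)]
    tauto

end esymmOn

lemma mul_esymmOn_insert_sub_mul_esymmOn_insert {σ R : Type*} [DecidableEq σ] [CommRing R]
    (y : σ → R) {i j : σ} {T : Finset σ} (hi : i ∉ T) (hj : j ∉ T) (k : ℕ) :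
    y i * esymmOn y (insert j T) k - y j * esymmOn y (insert i T) k
      = (y i - y j) * esymmOn y T k := by
  cases k with
  | zero => simp
  | succ k =>
    rw [esymmOn_insert_succ y hj, esymmOn_insert_succ y hi]
    ring

lemma sum_Ioi_eq_sum_powersetCard_two {α M : Type*} [LinearOrder α] [Fintype α]
    [LocallyFiniteOrderTop α] [AddCommMonoid M] (g : Finset α → M) :
    ∑ i, ∑ j ∈ Ioi i, g {i, j} = ∑ T ∈ univ.powersetCard 2, g T := by
  refine (sum_sigma' _ _ fun i j => g {i, j}).trans ?_
  refine sum_bij (fun p _ => {p.1, p.2}) ?_ ?_ ?_ fun _ _ => rfl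
  · rintro ⟨i, j⟩ h
    simp only [mem_sigma, mem_Ioi] at h
    simp [card_pair h.2.ne]
  · rintro ⟨i, j⟩ h ⟨k, l⟩ h' hpair
    simp only [mem_sigma, mem_Ioi] at h h'
    simp only [Finset.ext_iff, mem_insert, mem_singleton] at hpair
    have := hpair i; have := hpair j; have := hpair k; have := hpair l
    obtain ⟨rfl, rfl⟩ : i = k ∧ j = l := by grind
    rfl
  · intro T hT
    obtain ⟨x, y, hxy, rfl⟩ := card_eq_two.1 (mem_powersetCard.1 hT).2
    rcases hxy.lt_or_gt with h | h
    · exact ⟨⟨x, y⟩, by simpa using h, rfl⟩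
    · exact ⟨⟨y, x⟩, by simpa using h, pair_comm y x⟩

section squares

variable {σ R : Type*} [DecidableEq σ] [CommSemiring R]

lemma pderiv_esymmOn_sq_of_notMem {i : σ} {S : Finset σ} (h : i ∉ S) (k : ℕ) :
    pderiv i (esymmOn (fun l => (X l : MvPolynomial σ R) ^ 2) S k) = 0 := by
  nontriviality R
  refine pderiv_eq_zero_of_notMem_vars fun hi => h ?_
  obtain ⟨t, ht, hit⟩ := mem_biUnion.1 (vars_sum_subset _ _ hi)
  obtain ⟨l, hl, hil⟩ := mem_biUnion.1 (vars_prod _ hit)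
  have : i = l := by simpa using vars_pow _ 2 hil
  exact (mem_powersetCard.1 ht).1 (this ▸ hl)

lemma X_mul_pderiv_esymmOn_sq {i : σ} {S : Finset σ} (h : i ∈ S) (k : ℕ) :
    X i * pderiv i (esymmOn (fun l => (X l : MvPolynomial σ R) ^ 2) S (k + 1))
      = 2 * X i ^ 2 * esymmOn (fun l => X l ^ 2) (S.erase i) k := by
  rw [← insert_erase h, esymmOn_insert_succ _ (notMem_erase i S), erase_insert (notMem_erase i S),
    map_add, pderiv_mul, pderiv_esymmOn_sq_of_notMem (notMem_erase i S),
    pderiv_esymmOn_sq_of_notMem (notMem_erase i S), pderiv_pow, pderiv_X_self]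
  ring

end squares

lemma BnInvariant_eq_esymmOn (n c : ℕ) :
    BnInvariant n c = esymmOn (fun i => X i ^ 2) univ c := by
  simp [BnInvariant, esymm, esymmOn, map_sum, map_prod]

lemma two_mul_choose_two_sub (n b : ℕ) :
    2 * (n - b).choose 2 = (n - (b + 1) + 1) * (n - (b + 1)) := by
  rcases le_or_gt n b with h | h
  · simp [Nat.sub_eq_zero_of_le h, Nat.sub_eq_zero_of_le (h.trans b.le_succ)]
  · rw [Nat.choose_two_right, Nat.mul_div_cancel' (n - b).even_mul_pred_self.two_dvd]
    grind

theorem Bn_long_root_lambda_general (n a : ℕ) (ha : 1 ≤ a) :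
    ∃ Q : Fin n → Fin n → MvPolynomial (Fin n) ℝ,
      (∀ i j : Fin n, i < j →
          X i * pderiv i (BnInvariant n a) - X j * pderiv j (BnInvariant n a)
            = ((X i) ^ 2 - (X j) ^ 2) * Q i j)
      ∧ (4 : MvPolynomial (Fin n) ℝ) * ∑ i : Fin n, ∑ j ∈ Finset.Ioi i, Q i j
          = C ((4 * (n - a + 1) * (n - a) : ℕ) : ℝ) * BnInvariant n (a - 1) := by
  obtain ⟨b, rfl⟩ : ∃ b, a = b + 1 := ⟨a - 1, by omega⟩
  set y : Fin n → MvPolynomial (Fin n) ℝ := fun l => X l ^ 2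
  refine ⟨fun i j => 2 * esymmOn y (univ \ {i, j}) b, fun i j hij => ?_, ?_⟩
  · have hi : i ∉ univ \ {i, j} := by simp
    have hj : j ∉ univ \ {i, j} := by simp
    have hj' : univ.erase i = insert j (univ \ {i, j}) := by ext; grind
    have hi' : univ.erase j = insert i (univ \ {i, j}) := by ext; grind
    rw [BnInvariant_eq_esymmOn, X_mul_pderiv_esymmOn_sq (mem_univ i),
      X_mul_pderiv_esymmOn_sq (mem_univ j), hj', hi']
    linear_combination 2 * mul_esymmOn_insert_sub_mul_esymmOn_insert y hi hj b
  · calc (4 : MvPolynomial (Fin n) ℝ) * ∑ i, ∑ j ∈ Ioi i, 2 * esymmOn y (univ \ {i, j}) b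
        = 4 * (2 * ((n - b).choose 2 • esymmOn y univ b)) := by
          simp only [← mul_sum]
          rw [sum_Ioi_eq_sum_powersetCard_two fun T => esymmOn y (univ \ T) b,
            sum_powersetCard_esymmOn_sdiff, card_univ, Fintype.card_fin]
      _ = C ((4 * (n - (b + 1) + 1) * (n - (b + 1)) : ℕ) : ℝ) * BnInvariant n (b + 1 - 1) := by
          rw [Nat.add_sub_cancel, BnInvariant_eq_esymmOn, mul_assoc 4, ← two_mul_choose_two_sub]
          simp only [nsmul_eq_mul, Nat.cast_mul, map_mul, map_natCast]
          ring

/-- For the `Bₙ` invariants, each `xᵢ·∂pₐ/∂xᵢ - xⱼ·∂pₐ/∂xⱼ` is divisible by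
`xᵢ² - xⱼ²`, and `4·Σ_{i<j}` of the quotients equals `4(n-a+1)(n-a)·p_{a-1}`
(with `p₀ = 1`). -/
theorem Bn_long_root_lambda (n a : ℕ) (ha : 1 ≤ a) (han : a ≤ n) :
    ∃ Q : Fin n → Fin n → MvPolynomial (Fin n) ℝ,
      (∀ i j : Fin n, i < j →
          X i * pderiv i (BnInvariant n a) - X j * pderiv j (BnInvariant n a)
            = ((X i) ^ 2 - (X j) ^ 2) * Q i j)
      ∧ (4 : MvPolynomial (Fin n) ℝ) * ∑ i : Fin n, ∑ j ∈ Finset.Ioi i, Q i j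
          = C ((4 * (n - a + 1) * (n - a) : ℕ) : ℝ) * BnInvariant n (a - 1) :=
  Bn_long_root_lambda_general n a ha
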